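/- arXiv:1411.2348 — 2 statements merged into one kernel-verified Lean document; each statement's English description precedes it below -/
import Mathlib

section
/- Let 1 ≤ k ≤ q-1 and m ≥ 1. With respect to the product uniform probability measure μ^∞ on (F_q^m)^∞, almost every m-fold multisequence Z over F_q satisfies liminf_{n→∞} ( N_k^(m)(Z,n) − log(mn)/log(k+1) ) ≥ 0. -/
/-!
A recursion polynomial of degree at most `k` in each of its `c` variables is one of
`q ^ (k + 1) ^ c` polynomials, and together with the first `c` terms of the
`m` sequences it determines the whole length-`n` prefix. Hence at most `q ^ ((k + 1) ^ c + m c)`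
of the `q ^ (m n)` prefixes have complexity at most `c`. For `c ≤ log_{k+1}(m n) - ε` we have
`(k + 1) ^ c ≤ (k + 1) ^ (-ε) m n` and `m c = o(n)`, so the exponent deficit is at least `δ n`
for some `δ > 0`: the probability that the complexity falls below `log_{k+1}(m n) - ε` decays
geometrically in `n`, and Borel–Cantelli applies.
-/

/-- `Z` satisfies a recursion of order `c` by a polynomial of degree at most `k`
in each variable, over the first `n` terms of each component sequence. -/
def SatisfiesNLRecursion {Fq : Type*} [Field Fq] {m : ℕ}
    (Z : Fin m → ℕ → Fq) (k n c : ℕ) : Prop :=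
  ∃ f : MvPolynomial (Fin c) Fq,
    (∀ s : Fin c, MvPolynomial.degreeOf s f ≤ k) ∧
    ∀ j : Fin m, ∀ i : ℕ, i + c < n →
      Z j (i + c) = MvPolynomial.eval (fun s : Fin c => Z j (i + s)) f

open scoped Classical in
/-- The `n`th joint nonlinear complexity of order `k` of the `m`-fold
multisequence `Z` over `F_q`. -/
noncomputable def jointNLC {Fq : Type*} [Field Fq] {m : ℕ}
    (Z : Fin m → ℕ → Fq) (k n : ℕ) : ℕ :=
  if ∀ j : Fin m, ∀ i : ℕ, i < n → Z j i = 0 then 0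
  else sInf {c : ℕ | SatisfiesNLRecursion Z k n c}

theorem Finsupp.natCard_setOf_forall_apply_le {σ : Type*} [Fintype σ] (k : ℕ) :
    Nat.card {d : σ →₀ ℕ | ∀ i, d i ≤ k} = (k + 1) ^ Fintype.card σ := by
  let e : {d : σ →₀ ℕ | ∀ i, d i ≤ k} ≃ (σ → Set.Iic k) :=
    (equivFunOnFinite.subtypeEquiv fun _ => Iff.rfl).trans
      (Equiv.subtypePiEquivPi (p := fun _ b => b ≤ k))
  rw [Nat.card_congr e, Nat.card_fun]
  simp

namespace MvPolynomial

variable {σ τ R : Type*} [CommSemiring R]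

theorem mem_restrictDegree_iff_degreeOf_le {p : MvPolynomial σ R} {k : ℕ} :
    p ∈ restrictDegree σ R k ↔ ∀ i, degreeOf i p ≤ k := by
  simp only [mem_restrictDegree, degreeOf_le_iff]
  exact ⟨fun h i s hs => h s hs i, fun h s hs i => h i s hs⟩

theorem rename_mem_restrictDegree {f : σ → τ} (hf : Function.Injective f) {p : MvPolynomial σ R}
    {k : ℕ} (hp : p ∈ restrictDegree σ R k) : rename f p ∈ restrictDegree τ R k := by
  classical
  rw [mem_restrictDegree] at hp ⊢
  intro d hd t
  obtain ⟨u, rfl, hu⟩ := coeff_rename_ne_zero f p d (mem_support_iff.1 hd)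
  by_cases ht : t ∈ Set.range f
  · obtain ⟨s, rfl⟩ := ht
    rw [Finsupp.mapDomain_apply hf]
    exact hp u (mem_support_iff.2 hu) s
  · rw [Finsupp.mapDomain_of_notMem_range _ _ ht]
    exact Nat.zero_le k

theorem natCard_restrictDegree [Fintype σ] (K : Type*) [Field K] [Finite K] (k : ℕ) :
    Nat.card (restrictDegree σ K k) = Nat.card K ^ (k + 1) ^ Fintype.card σ := by
  have b : Module.Basis {d : σ →₀ ℕ | ∀ i, d i ≤ k} K (restrictDegree σ K k) :=
    basisRestrictSupport K _
  rw [Module.natCard_eq_pow_finrank (K := K), Module.finrank_eq_nat_card_basis b,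
    Finsupp.natCard_setOf_forall_apply_le]

end MvPolynomial

open MvPolynomial

theorem eq_of_forall_lt_of_eval_recursion {R : Type*} [CommSemiring R] {c n : ℕ}
    {f : MvPolynomial (Fin c) R} {u v : ℕ → R}
    (hu : ∀ i, i + c < n → u (i + c) = eval (fun s : Fin c => u (i + s)) f)
    (hv : ∀ i, i + c < n → v (i + c) = eval (fun s : Fin c => v (i + s)) f)
    (hinit : ∀ i < c, u i = v i) : ∀ i < n, u i = v i := by
  intro i
  induction i using Nat.strong_induction_on with
  | _ i ih =>
    intro hi
    obtain hic | hci := lt_or_ge i c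
    · exact hinit i hic
    · obtain ⟨i, rfl⟩ := Nat.exists_eq_add_of_le' hci
      rw [hu i hi, hv i hi]
      exact congrArg (eval · f) (funext fun s => ih _ (by omega) (by omega))

section Recursion

variable {F : Type*} [Field F] {m : ℕ} {k n : ℕ}

theorem SatisfiesNLRecursion.mono {Z : Fin m → ℕ → F} {c c' : ℕ}
    (h : SatisfiesNLRecursion Z k n c) (hc : c ≤ c') : SatisfiesNLRecursion Z k n c' := by
  obtain ⟨d, rfl⟩ := Nat.exists_eq_add_of_le hc
  obtain ⟨f, hdeg, hrec⟩ := h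
  have hinj : Function.Injective (Fin.addNat · d : Fin c → Fin (c + d)) :=
    fun _ _ h => (Fin.addNat_inj d).1 h
  -- the recursion of order `c + d` ignores its first `d` arguments
  refine ⟨rename (Fin.addNat · d) f, mem_restrictDegree_iff_degreeOf_le.1 <|
    rename_mem_restrictDegree hinj (mem_restrictDegree_iff_degreeOf_le.2 hdeg),
    fun j i hi => ?_⟩
  rw [eval_rename, ← add_assoc, add_right_comm, hrec j (i + d) (by omega)]
  exact congrArg (eval · f) (funext fun s => by simp [add_assoc, add_comm d])

theorem satisfiesNLRecursion_of_jointNLC_le {Z : Fin m → ℕ → F} {c : ℕ}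
    (h : jointNLC Z k n ≤ c) : SatisfiesNLRecursion Z k n c := by
  classical
  unfold jointNLC at h
  split_ifs at h with hzero
  · exact ⟨0, fun s => by simp, fun j i hi => by simp [hzero j (i + c) hi]⟩
  · have hn : SatisfiesNLRecursion Z k n n := ⟨0, fun s => by simp, fun j i hi => by omega⟩
    exact SatisfiesNLRecursion.mono
      (Nat.sInf_mem (s := {c | SatisfiesNLRecursion Z k n c}) ⟨n, hn⟩) h

theorem natCard_image_prefix_le [Fintype F] (k n c : ℕ) :
    Nat.card ((fun Z : ℕ → Fin m → F => fun i : Fin n => Z i) ''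
        {Z | jointNLC (fun j i => Z i j) k n ≤ c})
      ≤ Fintype.card F ^ ((k + 1) ^ c + m * c) := by
  classical
  set E := {Z : ℕ → Fin m → F | jointNLC (fun j i => Z i j) k n ≤ c}
  have hrecE : ∀ Z ∈ E, ∃ f ∈ restrictDegree (Fin c) F k,
      ∀ j : Fin m, ∀ i, i + c < n → Z (i + c) j = eval (fun s : Fin c => Z (i + s) j) f := by
    intro Z hZ
    obtain ⟨f, hdeg, hrec⟩ := satisfiesNLRecursion_of_jointNLC_le hZ
    exact ⟨f, mem_restrictDegree_iff_degreeOf_le.2 hdeg, hrec⟩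
  choose! poly hpoly hrec using hrecE
  let code : (fun Z : ℕ → Fin m → F => fun i : Fin n => Z i) '' E →
      restrictDegree (Fin c) F k × (Fin c → Fin m → F) := fun W =>
    (⟨poly W.2.choose, hpoly _ W.2.choose_spec.1⟩, fun t => W.2.choose t)
  have hcode : Function.Injective code := by
    rintro ⟨W, hW⟩ ⟨W', hW'⟩ heq
    obtain ⟨hZ, hZW⟩ := hW.choose_spec
    obtain ⟨hZ', hZW'⟩ := hW'.choose_spec
    simp only [code, Prod.mk.injEq, Subtype.mk.injEq] at heq
    obtain ⟨hf, hinit⟩ := heq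
    refine Subtype.ext (hZW.symm.trans (Eq.trans ?_ hZW'))
    funext i j
    refine eq_of_forall_lt_of_eval_recursion (u := fun i => hW.choose i j)
      (v := fun i => hW'.choose i j) (hrec _ hZ j) (hf ▸ hrec _ hZ' j)
      (fun i hi => congrFun (congrFun hinit ⟨i, hi⟩) j) i i.2
  have : Finite (restrictDegree (Fin c) F k) := Module.finite_of_finite F
  calc _ ≤ Nat.card (restrictDegree (Fin c) F k × (Fin c → Fin m → F)) :=
        Nat.card_le_card_of_injective code hcode
    _ = Fintype.card F ^ ((k + 1) ^ c + m * c) := by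
        simp only [Nat.card_prod, natCard_restrictDegree, Nat.card_eq_fintype_card,
          Fintype.card_fun, Fintype.card_fin]
        ring

end Recursion

open Filter Real Asymptotics in
theorem eventually_rpow_add_mul_add_le {b M ε : ℝ} (hb : 1 < b) (hM : 0 < M) (hε : 0 < ε) :
    ∃ δ > 0, ∀ᶠ n : ℕ in atTop, ∀ c : ℕ, (c : ℝ) ≤ logb b (M * n) - ε →
      b ^ c + M * c + δ * n ≤ M * n := by
  set a := b ^ (-ε)
  have ha : a < 1 := rpow_lt_one_of_one_lt_of_neg hb (neg_neg_of_pos hε)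
  refine ⟨M * (1 - a) / 2, by nlinarith, ?_⟩
  have hlittleO : (fun n : ℕ => logb b (M * n)) =o[atTop] (fun n : ℕ => (n : ℝ)) :=
    (isLittleO_logb_id_atTop.comp_tendsto
      (tendsto_natCast_atTop_atTop.const_mul_atTop hM)).trans_isBigO
      (isBigO_const_mul_self M _ _)
  filter_upwards [hlittleO.def (c := (1 - a) / 2) (by linarith), eventually_gt_atTop 0]
    with n hlog hn c hc
  have hMn : 0 < M * n := by positivity
  have hpow : b ^ c ≤ a * (M * n) :=
    calc b ^ c = b ^ (c : ℝ) := (rpow_natCast b c).symm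
      _ ≤ b ^ (logb b (M * n) + -ε) := rpow_le_rpow_of_exponent_le hb.le hc
      _ = a * (M * n) := by rw [rpow_add (by linarith), rpow_logb (by linarith) hb.ne' hMn, mul_comm]
  have hmul : M * c ≤ M * (1 - a) / 2 * n := by
    have : logb b (M * n) ≤ (1 - a) / 2 * n := by
      simpa using (le_abs_self _).trans hlog
    nlinarith
  nlinarith

open scoped ENNReal

theorem ENNReal.pow_div_pow_le_rpow_neg_pow {q : ℝ≥0∞} (hq : 1 ≤ q) (hq' : q ≠ ⊤) {e M n : ℕ}
    {δ : ℝ} (h : (e : ℝ) + δ * n ≤ M) : q ^ e / q ^ M ≤ (q ^ (-δ)) ^ n := by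
  have hq0 : q ≠ 0 := (zero_lt_one.trans_le hq).ne'
  rw [← ENNReal.rpow_natCast q e, ← ENNReal.rpow_natCast q M, ← ENNReal.rpow_sub _ _ hq0 hq',
    ← ENNReal.rpow_natCast, ← ENNReal.rpow_mul]
  exact ENNReal.rpow_le_rpow_of_exponent_le hq (by linarith)

open Filter in
theorem Real.liminf_nonneg_of_forall_pos {ι : Type*} {f : Filter ι} {u : ι → ℝ}
    (h : ∀ ε > 0, ∀ᶠ x in f, -ε ≤ u x) : 0 ≤ liminf u f := by
  by_cases hu : IsCoboundedUnder (· ≥ ·) f u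
  · exact le_of_forall_pos_le_add fun ε hε => by linarith [le_liminf_of_le hu (h ε hε)]
  · rw [Real.liminf_of_not_isCoboundedUnder hu]

open Filter in
theorem MeasureTheory.ae_eventually_notMem_of_le_geometric {α : Type*} [MeasurableSpace α]
    {μ : Measure α} {s : ℕ → Set α} {r : ℝ≥0∞} (hr : r < 1)
    (h : ∀ᶠ n in atTop, μ (s n) ≤ r ^ n) : ∀ᵐ x ∂μ, ∀ᶠ n in atTop, x ∉ s n := by
  obtain ⟨N, hN⟩ := eventually_atTop.1 h
  have hsum : ∑' n, μ (s (n + N)) ≠ ∞ := by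
    refine ne_top_of_le_ne_top ?_ (ENNReal.tsum_le_tsum fun n =>
      (hN (n + N) (by omega)).trans (pow_le_pow_right_of_le_one' hr.le (by omega : n ≤ n + N)))
    rw [ENNReal.tsum_geometric]
    exact ENNReal.inv_ne_top.2 (tsub_pos_of_lt hr).ne'
  filter_upwards [ae_eventually_notMem hsum] with x hx
  filter_upwards [(tendsto_sub_atTop_nat N).eventually hx, eventually_ge_atTop N] with n hn hNn
  rwa [Nat.sub_add_cancel hNn] at hn

variable {Fq : Type*} [Field Fq] [Fintype Fq] {m : ℕ}

instance fintypeTopMeasurable : MeasurableSpace (Fin m → Fq) := ⊤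

instance : MeasurableSpace (ℕ → Fin m → Fq) := MeasurableSpace.pi

section Probability

open MeasureTheory Filter

def IsUniformOnPrefixes (μ : Measure (ℕ → Fin m → Fq)) : Prop :=
  ∀ (n : ℕ) (S : Set (Fin n → Fin m → Fq)),
    μ {Z : ℕ → Fin m → Fq | (fun i : Fin n => Z i) ∈ S}
      = (Nat.card S : ℝ≥0∞) / (Fintype.card Fq : ℝ≥0∞) ^ (m * n)

theorem measure_jointNLC_le_le {μ : Measure (ℕ → Fin m → Fq)} (hμ : IsUniformOnPrefixes μ)
    (k n c : ℕ) :
    μ {Z | jointNLC (fun j i => Z i j) k n ≤ c}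
      ≤ (Fintype.card Fq : ℝ≥0∞) ^ ((k + 1) ^ c + m * c) / (Fintype.card Fq : ℝ≥0∞) ^ (m * n) :=
  calc _ ≤ μ ((fun Z : ℕ → Fin m → Fq => fun i : Fin n => Z i) ⁻¹'
          ((fun Z : ℕ → Fin m → Fq => fun i : Fin n => Z i) ''
            {Z | jointNLC (fun j i => Z i j) k n ≤ c})) :=
        measure_mono (Set.subset_preimage_image _ _)
    _ = _ := hμ n _
    _ ≤ _ := by
        gcongr
        exact_mod_cast natCard_image_prefix_le k n c

theorem ae_eventually_logb_sub_le_jointNLC {μ : Measure (ℕ → Fin m → Fq)}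
    (hμ : IsUniformOnPrefixes μ) {k : ℕ} (hk : 0 < k) (hm : 0 < m) {ε : ℝ} (hε : 0 < ε) :
    ∀ᵐ Z ∂μ, ∀ᶠ n : ℕ in atTop,
      Real.logb (k + 1) (m * n) - ε ≤ jointNLC (fun j i => Z i j) k n := by
  obtain ⟨δ, hδ, hdeficit⟩ := eventually_rpow_add_mul_add_le (b := k + 1) (M := m)
    (by norm_cast; omega) (by exact_mod_cast hm) hε
  have hq : (1 : ℝ≥0∞) < Fintype.card Fq := by exact_mod_cast Fintype.one_lt_card
  refine (ae_eventually_notMem_of_le_geometric (s := fun n => {Z : ℕ → Fin m → Fq |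
      (jointNLC (fun j i => Z i j) k n : ℝ) < Real.logb (k + 1) (m * n) - ε})
    (ENNReal.rpow_lt_one_of_one_lt_of_neg hq (neg_neg_of_pos hδ)) ?_).mono
    fun Z hZ => hZ.mono fun n hn => not_lt.1 hn
  filter_upwards [hdeficit] with n hn
  rcases Set.eq_empty_or_nonempty {Z : ℕ → Fin m → Fq |
      (jointNLC (fun j i => Z i j) k n : ℝ) < Real.logb (k + 1) (m * n) - ε} with hbad | ⟨Z₀, hZ₀⟩
  · simp [hbad]
  set c := ⌊Real.logb (k + 1) (m * n) - ε⌋₊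
  have hc : (c : ℝ) ≤ Real.logb (k + 1) (m * n) - ε :=
    Nat.floor_le ((Nat.cast_nonneg _).trans hZ₀.le)
  calc _ ≤ μ {Z | jointNLC (fun j i => Z i j) k n ≤ c} :=
        measure_mono fun Z hZ => Nat.le_floor hZ.le
    _ ≤ _ := measure_jointNLC_le_le hμ k n c
    _ ≤ _ := ENNReal.pow_div_pow_le_rpow_neg_pow hq.le (ENNReal.natCast_ne_top _) <| by
        have := hn c hc
        push_cast
        linarith

end Probability

open Filter MeasureTheory in
theorem jointNLC_liminf_ae_general
    (k : ℕ) (hk1 : 1 ≤ k) (hm : 1 ≤ m)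
    (μ : Measure (ℕ → Fin m → Fq))
    (hμ : ∀ (n : ℕ) (S : Set (Fin n → Fin m → Fq)),
      μ {Z : ℕ → Fin m → Fq | (fun i : Fin n => Z i) ∈ S}
        = (Nat.card S : ENNReal) / (Fintype.card Fq : ENNReal) ^ (m * n)) :
    ∀ᵐ Z ∂μ, 0 ≤ liminf
      (fun n : ℕ => (jointNLC (fun j i => Z i j) k n : ℝ)
        - Real.log (m * n) / Real.log (k + 1)) atTop := by
  have h : ∀ᵐ Z ∂μ, ∀ j : ℕ, ∀ᶠ n : ℕ in atTop,
      Real.logb (k + 1) (m * n) - 1 / (j + 1) ≤ jointNLC (fun j i => Z i j) k n :=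
    ae_all_iff.2 fun j => ae_eventually_logb_sub_le_jointNLC hμ hk1 hm (by positivity)
  filter_upwards [h] with Z hZ
  refine Real.liminf_nonneg_of_forall_pos fun ε hε => ?_
  obtain ⟨j, hj⟩ := exists_nat_one_div_lt hε
  filter_upwards [hZ j] with n hn
  rw [Real.log_div_log]
  linarith

open Filter MeasureTheory in
/-- with respect to the product of uniform measures on `(F_q^m)^∞`,
almost every `m`-fold multisequence `Z` over `F_q` satisfies
`liminf_n (N_k^(m)(Z,n) − log(mn)/log(k+1)) ≥ 0`. -/
theorem jointNLC_liminf_ae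
    (k : ℕ) (hk1 : 1 ≤ k) (hkq : k ≤ Fintype.card Fq - 1) (hm : 1 ≤ m)
    (μ : Measure (ℕ → Fin m → Fq)) [IsProbabilityMeasure μ]
    (hμ : ∀ (n : ℕ) (S : Set (Fin n → Fin m → Fq)),
      μ {Z : ℕ → Fin m → Fq | (fun i : Fin n => Z i) ∈ S}
        = (Nat.card S : ENNReal) / (Fintype.card Fq : ENNReal) ^ (m * n)) :
    ∀ᵐ Z ∂μ, 0 ≤ liminf
      (fun n : ℕ => (jointNLC (fun j i => Z i j) k n : ℝ)
        - Real.log (m * n) / Real.log (k + 1)) atTop :=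
  jointNLC_liminf_ae_general k hk1 hm μ hμ
end

section
/- Let q ≥ 3 be a prime power, γ ∈ F_q^* of order t, and let Z be the m-fold multisequence over F_q defined by σ_i^(j) = (α_j γ^i − β)^{q-2} for pairwise distinct α_1,...,α_m ∈ F_q^* (2 ≤ m ≤ q−1) and β ∈ F_q^*. Then for integers 1 ≤ k ≤ q−1 and n ≥ 1, N_k^(m)(Z,n) ≥ min( (mn−2)/(m+k+1), (δ_t m − 2)/(k+1), t ). -/
open scoped Classical in
/-- `‖ξ‖_t = b` if `ξ = γ^b` with `0 ≤ b < t`, and `‖ξ‖_t = t` if `ξ ∉ ⟨γ⟩`. -/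
noncomputable def normT {Fq : Type*} [Field Fq] (γ : Fq) (t : ℕ) (ξ : Fq) : ℕ :=
  if ∃ b : ℕ, b < t ∧ ξ = γ ^ b then sInf {b : ℕ | ξ = γ ^ b} else t

/-- `δ_t`: the minimum of `‖α_{j1} α_{j2}⁻¹‖_t` over `j1 ≠ j2`. -/
noncomputable def deltaT {Fq : Type*} [Field Fq] {m : ℕ}
    (γ : Fq) (t : ℕ) (α : Fin m → Fq) : ℕ :=
  sInf {d : ℕ | ∃ j1 j2 : Fin m, j1 ≠ j2 ∧ d = normT γ t (α j1 * (α j2)⁻¹)}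

/-!
Suppose the sequences satisfy a recursion `σ_{i+c} = f(σ_i, …, σ_{i+c-1})` with `f` of degree
`≤ k` in each variable. Since `σ^{(j)}_{i+s} = (γ^s u - β)⁻¹` with `u = α_j γ^i`, clearing
denominators turns the recursion into the vanishing at `u` of the polynomial
`G = (γ^c X - β) ∏ₛ (γ^s X - β)^k f((γ^s X - β)⁻¹) - ∏ₛ (γ^s X - β)^k` of degree `≤ ck + 1`,
which is nonzero when `c < t` because `G(β/γ^c) ≠ 0`. The points `α_j γ^i` with
`i < min(n - c, δ_t)` are pairwise distinct by the definition of `δ_t`, and at most `c + 1` of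
them make a denominator vanish, so `m · min(n - c, δ_t) ≤ c(k + 1) + 2`.
-/

open Polynomial Finset

section

variable {F : Type*} [Field F]

theorem pow_card_sub_two_eq_inv [Fintype F] (hq : 3 ≤ Fintype.card F) (x : F) :
    x ^ (Fintype.card F - 2) = x⁻¹ := by
  rcases eq_or_ne x 0 with rfl | hx
  · rw [zero_pow (by omega), inv_zero]
  · refine eq_inv_of_mul_eq_one_left ?_
    rw [← pow_succ, show Fintype.card F - 2 + 1 = Fintype.card F - 1 by omega]
    exact FiniteField.pow_card_sub_one_eq_one x hx

theorem satisfiesNLRecursion_jointNLC {m : ℕ} (Z : Fin m → ℕ → F) (k n : ℕ) :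
    SatisfiesNLRecursion Z k n (jointNLC Z k n) := by
  by_cases hZ : ∀ j : Fin m, ∀ i : ℕ, i < n → Z j i = 0
  · rw [jointNLC, if_pos hZ]
    exact ⟨0, fun s => s.elim0, fun j i hi => by simpa using hZ j i (by omega)⟩
  · rw [jointNLC, if_neg hZ]
    exact Nat.sInf_mem (s := {c | SatisfiesNLRecursion Z k n c})
      ⟨n, 0, fun _ => by simp, fun _ _ _ => by omega⟩

theorem normT_le (γ : F) (t : ℕ) (ξ : F) : normT γ t ξ ≤ t := by
  unfold normT
  split_ifs with h
  · obtain ⟨b, hb, hξ⟩ := h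
    exact (Nat.sInf_le hξ).trans hb.le
  · rfl

theorem normT_le_of_eq_pow {γ ξ : F} {t b : ℕ} (hb : b < t) (h : ξ = γ ^ b) :
    normT γ t ξ ≤ b := by
  unfold normT
  rw [if_pos ⟨b, hb, h⟩]
  exact Nat.sInf_le h

theorem deltaT_le_normT {m : ℕ} (γ : F) (t : ℕ) (α : Fin m → F) {j₁ j₂ : Fin m}
    (h : j₁ ≠ j₂) : deltaT γ t α ≤ normT γ t (α j₁ * (α j₂)⁻¹) :=
  Nat.sInf_le ⟨j₁, j₂, h, rfl⟩

theorem deltaT_le {m : ℕ} (γ : F) (t : ℕ) (α : Fin m → F) : deltaT γ t α ≤ t := by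
  unfold deltaT
  rcases Set.eq_empty_or_nonempty
    {d : ℕ | ∃ j₁ j₂ : Fin m, j₁ ≠ j₂ ∧ d = normT γ t (α j₁ * (α j₂)⁻¹)} with h | h
  · rw [h, Nat.sInf_empty]
    exact Nat.zero_le t
  · obtain ⟨j₁, j₂, -, hd⟩ := Nat.sInf_mem h
    exact hd ▸ normT_le γ t _

theorem natDegree_prod_pow_le {c k : ℕ} {D : Fin c → F[X]} (hD : ∀ s, (D s).natDegree ≤ 1)
    {e : Fin c → ℕ} (he : ∀ s, e s ≤ k) : (∏ s, D s ^ e s).natDegree ≤ c * k := by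
  refine (natDegree_prod_le _ _).trans ?_
  calc ∑ s, (D s ^ e s).natDegree ≤ ∑ _s : Fin c, k :=
        sum_le_sum fun s _ => natDegree_pow_le.trans <|
          (Nat.mul_le_mul (he s) (hD s)).trans (mul_one k).le
    _ = c * k := by simp

noncomputable def clearDenominators {c : ℕ} (f : MvPolynomial (Fin c) F) (D : Fin c → F[X])
    (k : ℕ) : F[X] :=
  ∑ e ∈ f.support, C (f.coeff e) * ∏ s, D s ^ (k - e s)

theorem natDegree_clearDenominators_le {c : ℕ} (f : MvPolynomial (Fin c) F) {D : Fin c → F[X]}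
    (hD : ∀ s, (D s).natDegree ≤ 1) (k : ℕ) :
    (clearDenominators f D k).natDegree ≤ c * k :=
  natDegree_sum_le_of_forall_le _ _ fun _ _ =>
    (natDegree_C_mul_le _ _).trans (natDegree_prod_pow_le hD fun _ => Nat.sub_le k _)

theorem eval_clearDenominators {c k : ℕ} {f : MvPolynomial (Fin c) F}
    (hf : ∀ s, f.degreeOf s ≤ k) (D : Fin c → F[X]) {u : F} (hu : ∀ s, (D s).eval u ≠ 0) :
    (clearDenominators f D k).eval u =
      (∏ s, (D s).eval u ^ k) * MvPolynomial.eval (fun s => ((D s).eval u)⁻¹) f := by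
  rw [MvPolynomial.eval_eq', mul_sum, clearDenominators, eval_finsetSum]
  refine sum_congr rfl fun e he => ?_
  simp only [eval_mul, eval_C, eval_prod, eval_pow]
  rw [mul_left_comm, ← prod_mul_distrib]
  congr 1
  refine prod_congr rfl fun s _ => ?_
  rw [inv_pow, ← pow_sub₀ _ (hu s) ((MvPolynomial.monomial_le_degreeOf s he).trans (hf s))]

noncomputable def inversiveDenominator (γ β : F) (s : ℕ) : F[X] := C (γ ^ s) * X - C β

@[simp]
theorem eval_inversiveDenominator (γ β : F) (s : ℕ) (u : F) :
    (inversiveDenominator γ β s).eval u = γ ^ s * u - β := by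
  simp [inversiveDenominator]

theorem natDegree_inversiveDenominator_le (γ β : F) (s : ℕ) :
    (inversiveDenominator γ β s).natDegree ≤ 1 :=
  (natDegree_sub_le _ _).trans <| max_le ((natDegree_C_mul_le _ _).trans natDegree_X_le)
    ((natDegree_C β).trans_le zero_le_one)

theorem pow_mul_div_pow_sub_ne_zero {γ β : F} {s c : ℕ} (hs : s < c) (hc : c < orderOf γ)
    (hβ : β ≠ 0) : γ ^ s * (β / γ ^ c) - β ≠ 0 := by
  have hγ : γ ^ c ≠ 0 := pow_ne_zero c (by rintro rfl; simp at hc)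
  intro h
  have : γ ^ s = γ ^ c := by
    field_simp at h
    exact mul_left_cancel₀ hβ (by linear_combination h)
  exact hs.ne (pow_injOn_Iio_orderOf (hs.trans hc) hc this)

theorem card_le_of_inv_recursion {γ β : F} {c k : ℕ} (hc : c < orderOf γ) (hβ : β ≠ 0)
    {f : MvPolynomial (Fin c) F} (hf : ∀ s, f.degreeOf s ≤ k) {V : Finset F}
    (hV : ∀ u ∈ V, ∀ s ≤ c, γ ^ s * u - β ≠ 0)
    (hrec : ∀ u ∈ V, (γ ^ c * u - β)⁻¹ =
      MvPolynomial.eval (fun s : Fin c => (γ ^ (s : ℕ) * u - β)⁻¹) f) :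
    #V ≤ c * k + 1 := by
  set D : Fin c → F[X] := fun s => inversiveDenominator γ β s
  have hD : ∀ s, (D s).natDegree ≤ 1 := fun s => natDegree_inversiveDenominator_le γ β s
  set G := inversiveDenominator γ β c * clearDenominators f D k - ∏ s, D s ^ k
  have hdeg : G.natDegree ≤ c * k + 1 := by
    refine (natDegree_sub_le _ _).trans (max_le ?_ ?_)
    · refine natDegree_mul_le.trans ?_
      linarith [natDegree_inversiveDenominator_le γ β c, natDegree_clearDenominators_le f hD k]
    · exact (natDegree_prod_pow_le hD fun _ => le_rfl).trans (Nat.le_succ _)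
  have hroot : ∀ u ∈ V, G.eval u = 0 := by
    intro u hu
    have hc0 := hV u hu c le_rfl
    rw [eval_sub, eval_mul,
      eval_clearDenominators hf D fun s => by simpa [D] using hV u hu s s.is_lt.le]
    simp only [D, eval_inversiveDenominator, eval_prod, eval_pow, ← hrec u hu]
    rw [← mul_assoc, mul_comm _ (∏ s : Fin c, _), mul_assoc, mul_inv_cancel₀ hc0, mul_one,
      sub_self]
  have hG : G.eval (β / γ ^ c) ≠ 0 := by
    have hγc : γ ^ c ≠ 0 := pow_ne_zero c (by rintro rfl; simp at hc)
    simp only [G, D, eval_sub, eval_mul, eval_inversiveDenominator, eval_prod, eval_pow,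
      mul_div_cancel₀ β hγc, sub_self, zero_mul, zero_sub, neg_ne_zero]
    exact prod_ne_zero_iff.2 fun s _ => pow_ne_zero k (pow_mul_div_pow_sub_ne_zero s.is_lt hc hβ)
  by_contra! hcard
  exact hG (by rw [eq_zero_of_natDegree_lt_card_of_eval_eq_zero' G V hroot (by omega), eval_zero])

variable {m : ℕ} {α : Fin m → F} {γ : F}

theorem eq_and_eq_zero_of_mul_pow_eq_mul_pow_add (hα : ∀ j, α j ≠ 0) (hγ : γ ≠ 0)
    {L d i : ℕ} {j j' : Fin m} (hd : d < L) (hL : L ≤ deltaT γ (orderOf γ) α)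
    (h : α j * γ ^ i = α j' * γ ^ (i + d)) : j = j' ∧ d = 0 := by
  have hd' : d < orderOf γ := hd.trans_le (hL.trans (deltaT_le _ _ _))
  have hj : α j = α j' * γ ^ d := by
    refine mul_right_cancel₀ (pow_ne_zero i hγ) ?_
    rw [h, pow_add]
    ring
  by_cases hjj : j = j'
  · subst hjj
    have h1 : γ ^ d = 1 := by
      simpa using mul_left_cancel₀ (hα j) (hj.symm.trans (mul_one _).symm)
    exact ⟨rfl, Nat.eq_zero_of_dvd_of_lt (orderOf_dvd_of_pow_eq_one h1) hd'⟩
  · have hratio : α j * (α j')⁻¹ = γ ^ d := by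
      rw [hj, mul_comm, inv_mul_cancel_left₀ (hα j')]
    have := (deltaT_le_normT γ (orderOf γ) α hjj).trans (normT_le_of_eq_pow hd' hratio)
    omega

theorem injOn_mul_pow (hα : ∀ j, α j ≠ 0) (hγ : γ ≠ 0) {L : ℕ}
    (hL : L ≤ deltaT γ (orderOf γ) α) :
    Set.InjOn (fun p : Fin m × ℕ => α p.1 * γ ^ p.2)
      ↑(univ ×ˢ range L : Finset (Fin m × ℕ)) := by
  rintro ⟨j, i⟩ hi ⟨j', i'⟩ hi' h
  simp only [coe_product, coe_univ, coe_range, Set.mem_prod, Set.mem_univ, Set.mem_Iio,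
    true_and] at hi hi' h
  wlog hii : i ≤ i' generalizing j i j' i'
  · exact (this j' i' j i h.symm hi' hi (by omega)).symm
  obtain ⟨d, rfl⟩ := Nat.exists_eq_add_of_le hii
  obtain ⟨rfl, rfl⟩ := eq_and_eq_zero_of_mul_pow_eq_mul_pow_add hα hγ (by omega) hL h
  rfl

theorem mul_le_of_satisfiesNLRecursion_inv (hα : ∀ j, α j ≠ 0) {β : F} (hβ : β ≠ 0)
    {k n c L : ℕ} (hrec : SatisfiesNLRecursion (fun j i => (α j * γ ^ i - β)⁻¹) k n c)
    (hc : c < orderOf γ) (hcL : c + L ≤ n) (hL : L ≤ deltaT γ (orderOf γ) α) :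
    m * L ≤ c * (k + 1) + 2 := by
  classical
  obtain ⟨f, hf, hfrec⟩ := hrec
  have hγ : γ ≠ 0 := by rintro rfl; simp at hc
  set U := (univ ×ˢ range L).image fun p : Fin m × ℕ => α p.1 * γ ^ p.2
  set B := (range (c + 1)).image fun s => β / γ ^ s
  have hU : #U = m * L := by
    rw [card_image_of_injOn (injOn_mul_pow hα hγ hL)]
    simp
  have hB : #B ≤ c + 1 := card_image_le.trans (card_range _).le
  have hgood : ∀ u ∈ U \ B, ∀ s ≤ c, γ ^ s * u - β ≠ 0 := by
    intro u hu s hs h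
    refine (mem_sdiff.1 hu).2 (mem_image.2 ⟨s, mem_range.2 (by omega), ?_⟩)
    rw [div_eq_iff (pow_ne_zero s hγ)]
    linear_combination -h
  have hrec : ∀ u ∈ U \ B, (γ ^ c * u - β)⁻¹ =
      MvPolynomial.eval (fun s : Fin c => (γ ^ (s : ℕ) * u - β)⁻¹) f := by
    intro u hu
    obtain ⟨⟨j, i⟩, hji, rfl⟩ := mem_image.1 (mem_sdiff.1 hu).1
    have hshift : ∀ s, α j * γ ^ (i + s) = γ ^ s * (α j * γ ^ i) := fun s => by ring
    simpa only [hshift] using hfrec j i (by simp at hji; omega)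
  have := card_le_of_inv_recursion hc hβ hf hgood hrec
  have := card_le_card_sdiff_add_card (s := U) (t := B)
  linarith

end

theorem jointNLC_inversive_period_t_lower_bound_general
    {Fq : Type*} [Field Fq] [Fintype Fq] (q : ℕ) (hq : q = Fintype.card Fq)
    (hq3 : 3 ≤ q) {m : ℕ}
    (γ : Fq) (t : ℕ) (hγt : orderOf γ = t)
    (α : Fin m → Fq) (hα0 : ∀ j, α j ≠ 0)
    (β : Fq) (hβ : β ≠ 0)
    (k n : ℕ) :
    (jointNLC (fun (j : Fin m) (i : ℕ) => (α j * γ ^ i - β) ^ (q - 2)) k n : ℝ)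
      ≥ min (min (((m : ℝ) * n - 2) / ((m : ℝ) + k + 1))
              (((deltaT γ t α : ℝ) * m - 2) / ((k : ℝ) + 1)))
          (t : ℝ) := by
  subst hq hγt
  set Z : Fin m → ℕ → Fq := fun j i => (α j * γ ^ i - β) ^ (Fintype.card Fq - 2) with hZ
  have hrec := satisfiesNLRecursion_jointNLC Z k n
  generalize jointNLC Z k n = N at hrec ⊢
  simp only [hZ, pow_card_sub_two_eq_inv hq3] at hrec
  set δ := deltaT γ (orderOf γ) α
  by_contra! h
  simp only [lt_min_iff] at h
  obtain ⟨⟨hn, hδ⟩, ht⟩ := h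
  rw [lt_div_iff₀ (by positivity)] at hn hδ
  have hNn : N ≤ n := by
    by_contra! h
    have : (n : ℝ) + 1 ≤ N := by exact_mod_cast h
    nlinarith
  obtain ⟨d, rfl⟩ := Nat.exists_eq_add_of_le hNn
  have hbound : ∀ L, N + L ≤ N + d → L ≤ δ → (m : ℝ) * L ≤ N * (k + 1) + 2 :=
    fun L hL hLδ => by
      exact_mod_cast mul_le_of_satisfiesNLRecursion_inv hα0 hβ hrec (by exact_mod_cast ht) hL hLδ
  rcases le_total d δ with hle | hle
  · have := hbound d le_rfl hle
    push_cast at hn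
    linarith
  · have := hbound δ (by omega) le_rfl
    linarith

/-- Theorem 2: for the inversive multisequence
`σ_i^(j) = (α_j γ^i − β)^{q−2}`,
`N_k^(m)(Z,n) ≥ min( (mn−2)/(m+k+1), (δ_t m − 2)/(k+1), t )`. -/
theorem jointNLC_inversive_period_t_lower_bound
    {Fq : Type*} [Field Fq] [Fintype Fq] (q : ℕ) (hq : q = Fintype.card Fq)
    (hq3 : 3 ≤ q) {m : ℕ} (hm2 : 2 ≤ m) (hmq : m ≤ q - 1)
    (γ : Fq) (t : ℕ) (hγt : orderOf γ = t) (hγ0 : γ ≠ 0)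
    (α : Fin m → Fq) (hα0 : ∀ j, α j ≠ 0) (hαinj : Function.Injective α)
    (β : Fq) (hβ : β ≠ 0)
    (k n : ℕ) (hk1 : 1 ≤ k) (hkq : k ≤ q - 1) (hn : 1 ≤ n) :
    (jointNLC (fun (j : Fin m) (i : ℕ) => (α j * γ ^ i - β) ^ (q - 2)) k n : ℝ)
      ≥ min (min (((m : ℝ) * n - 2) / ((m : ℝ) + k + 1))
              (((deltaT γ t α : ℝ) * m - 2) / ((k : ℝ) + 1)))
          (t : ℝ) :=
  jointNLC_inversive_period_t_lower_bound_general q hq hq3 γ t hγt α hα0 β hβ k n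
end
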